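/- arXiv:2502.11788 — 4 statements merged into one kernel-verified Lean document; each statement's English description precedes it below -/
import Mathlib

section
/- The function h : ℝ → ℝ defined by h(β) = log( 1/2 + (1/2)·exp(−(1/2)·exp(β)) ) − (1/2)·log( 1/2 + (1/2)·exp(−exp(β)) ) is not constant; that is, there exist β₁, β₂ ∈ ℝ with h(β₁) ≠ h(β₂). -/
open Real

/-- The difference `h` between the offset-approach and ratio-approach
zero-inflated Poisson log-likelihoods (with φ = 1/2, t = 1/2, y = 0) is not
constant: the two approaches are not equivalent for the ZIP distribution. -/
theorem zip_offset_ratio_not_equiv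
    (h : ℝ → ℝ)
    (hh : ∀ β, h β =
      Real.log (1/2 + (1/2) * Real.exp (-(1/2) * Real.exp β))
      - (1/2) * Real.log (1/2 + (1/2) * Real.exp (-Real.exp β))) :
    ∃ β₁ β₂ : ℝ, h β₁ ≠ h β₂ := by
  refine ⟨0, Real.log 2, fun heq => ?_⟩
  rw [hh 0, hh (Real.log 2), Real.exp_zero, Real.exp_log (by norm_num)] at heq
  set u : ℝ := Real.exp (-(1/2)) with hu
  have hu0 : 0 < u := Real.exp_pos _
  have hu1 : u < 1 := Real.exp_lt_one_iff.2 (by norm_num)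
  have e1 : Real.exp (-(1/2) * 1) = u := by rw [hu]; ring_nf
  have e2 : Real.exp (-(1:ℝ)) = u ^ 2 := by
    rw [hu, ← Real.exp_nat_mul]; norm_num
  have e3 : Real.exp (-(1/2) * 2) = u ^ 2 := by
    rw [show (-(1/2) * 2 : ℝ) = -1 by ring, e2]
  have e4 : Real.exp (-(2:ℝ)) = u ^ 4 := by
    rw [hu, ← Real.exp_nat_mul]; norm_num
  rw [e1, e2, e3, e4] at heq
  set A : ℝ := 1/2 + 1/2 * u with hA
  set B : ℝ := 1/2 + 1/2 * u ^ 2 with hB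
  set C : ℝ := 1/2 + 1/2 * u ^ 4 with hC
  have hApos : 0 < A := by positivity
  have hBpos : 0 < B := by positivity
  have hCpos : 0 < C := by positivity
  -- from heq : log A - 1/2 log B = log B - 1/2 log C
  have hlog : Real.log (A ^ 2 * C) = Real.log (B ^ 3) := by
    rw [Real.log_mul (by positivity) (by positivity), Real.log_pow, Real.log_pow]
    push_cast
    linarith
  have hABC : A ^ 2 * C = B ^ 3 := by
    have := Real.log_injOn_pos (Set.mem_Ioi.mpr (by positivity))
      (Set.mem_Ioi.mpr (by positivity)) hlog
    exact this
  rw [hA, hB, hC] at hABC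
  nlinarith [mul_pos (mul_pos hu0 (sub_pos.2 hu1))
      (sub_pos.2 (show u ^ 3 < 1 by nlinarith)), sq_nonneg u, sq_nonneg (1 - u)]
end

section
/- Let n, q be positive integers, let X be a real n × (q+1) matrix of rank q+1, let t_1,…,t_n ∈ (0,1), ζ_1,…,ζ_n > 0, and p ∈ (1,2). Define the diagonal matrices D^O = diag( t_i^{2−p}·ζ_i^{2−p} ) and D^R = diag( t_i·ζ_i^{2−p} ). Then XᵀD^O X − XᵀD^R X is a positive definite (q+1) × (q+1) matrix. -/
open Matrix Real

theorem Matrix.mulVec_injective_of_rank_eq_card {m n K : Type*} [Fintype m] [Fintype n]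
    [Field K] {A : Matrix m n K} (hA : A.rank = Fintype.card n) :
    Function.Injective A.mulVec := by
  rw [mulVec_injective_iff, linearIndependent_iff_card_eq_finrank_span, ← hA,
    rank_eq_finrank_span_cols, Set.finrank]

theorem fisher_core_diff_posDef_general
    (n q : ℕ)
    (X : Matrix (Fin n) (Fin (q + 1)) ℝ) (hX : X.rank = q + 1)
    (t ζ : Fin n → ℝ)
    (ht0 : ∀ i, 0 < t i) (ht1 : ∀ i, t i < 1)
    (hζ : ∀ i, 0 < ζ i)
    (p : ℝ) (hp1 : 1 < p)
    (DO DR : Matrix (Fin n) (Fin n) ℝ)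
    (hDO : DO = Matrix.diagonal (fun i => t i ^ (2 - p) * ζ i ^ (2 - p)))
    (hDR : DR = Matrix.diagonal (fun i => t i * ζ i ^ (2 - p))) :
    (Xᵀ * DO * X - Xᵀ * DR * X).PosDef := by
  have hweight : ∀ i, 0 < t i ^ (2 - p) * ζ i ^ (2 - p) - t i * ζ i ^ (2 - p) := fun i =>
    sub_pos.2 <| mul_lt_mul_of_pos_right
      (self_lt_rpow_of_lt_one (ht0 i) (ht1 i) (by linarith)) (rpow_pos_of_pos (hζ i) _)
  have hX_inj : Function.Injective X.mulVec :=
    mulVec_injective_of_rank_eq_card (by rwa [Fintype.card_fin])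
  rw [hDO, hDR, ← Matrix.sub_mul, ← Matrix.mul_sub, diagonal_sub,
    ← conjTranspose_eq_transpose_of_trivial]
  exact (PosDef.diagonal hweight).conjTranspose_mul_mul_same hX_inj

/-- The difference `XᵀD^O X − XᵀD^R X` between the offset and ratio Fisher
information cores is positive definite when all exposures satisfy
`0 < t_i < 1` and `p ∈ (1,2)`. -/
theorem fisher_core_diff_posDef
    (n q : ℕ) (hn : 0 < n) (hq : 0 < q)
    (X : Matrix (Fin n) (Fin (q + 1)) ℝ) (hX : X.rank = q + 1)
    (t ζ : Fin n → ℝ)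
    (ht0 : ∀ i, 0 < t i) (ht1 : ∀ i, t i < 1)
    (hζ : ∀ i, 0 < ζ i)
    (p : ℝ) (hp1 : 1 < p) (hp2 : p < 2)
    (DO DR : Matrix (Fin n) (Fin n) ℝ)
    (hDO : DO = Matrix.diagonal (fun i => t i ^ (2 - p) * ζ i ^ (2 - p)))
    (hDR : DR = Matrix.diagonal (fun i => t i * ζ i ^ (2 - p))) :
    (Xᵀ * DO * X - Xᵀ * DR * X).PosDef :=
  fisher_core_diff_posDef_general n q X hX t ζ ht0 ht1 hζ p hp1 DO DR hDO hDR
end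

section
/- Let n, q be positive integers, let X be a real n × (q+1) matrix of rank q+1, let t_1,…,t_n ∈ (0,1), ζ_1,…,ζ_n > 0, and p ∈ (1,2). Define D^O = diag( t_i^{2−p}·ζ_i^{2−p} ) and D^R = diag( t_i·ζ_i^{2−p} ). Then for every nonzero vector x ∈ ℝ^{q+1}, one has xᵀ(XᵀD^R X)⁻¹x > xᵀ(XᵀD^O X)⁻¹x > 0. -/
/-!
Since `0 < t i < 1` and `2 - p < 1`, we have `t i < t i ^ (2 - p)`, so `D^R < D^O` entrywise and,
as `X` has full column rank, `Xᵀ D^R X < Xᵀ D^O X` in the Loewner order. Inversion reverses the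
strict Loewner order, by the variational formula `xᵀ B⁻¹ x = max_u (2 uᵀx - uᵀ B u)` for positive
definite `B`: taking `u = A⁻¹ x` gives `xᵀ B⁻¹ x ≥ 2 uᵀx - uᵀ B u > 2 uᵀx - uᵀ A u = xᵀ A⁻¹ x`.
-/

open Matrix Real

namespace Matrix

lemma mulVec_injective_of_rank_eq_card_s8 {K m k : Type*} [Field K] [Fintype k]
    {X : Matrix m k K} (hX : X.rank = Fintype.card k) : Function.Injective X.mulVec :=
  mulVec_injective_iff.mpr <|
    linearIndependent_iff_card_eq_finrank_span.mpr (hX.symm.trans X.rank_eq_finrank_span_cols)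

lemma PosDef.transpose_mul_diagonal_mul {K m k : Type*} [Field K] [PartialOrder K] [StarRing K]
    [StarOrderedRing K] [TrivialStar K] [Fintype m] [Fintype k] [DecidableEq m]
    {X : Matrix m k K} (hX : Function.Injective X.mulVec) {d : m → K} (hd : ∀ i, 0 < d i) :
    (Xᵀ * diagonal d * X).PosDef := by
  simpa only [conjTranspose_eq_transpose_of_trivial] using
    (PosDef.diagonal hd).conjTranspose_mul_mul_same hX

section TrivialStar

variable {K k : Type*} [Field K] [LinearOrder K] [IsStrictOrderedRing K] [StarRing K]
  [TrivialStar K] [Fintype k] [DecidableEq k]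

lemma PosDef.two_mul_dotProduct_sub_le_dotProduct_inv_mulVec {B : Matrix k k K}
    (hB : B.PosDef) (u x : k → K) :
    2 * (u ⬝ᵥ x) - u ⬝ᵥ (B *ᵥ u) ≤ x ⬝ᵥ (B⁻¹ *ᵥ x) := by
  set v := B⁻¹ *ᵥ x
  have hv : B *ᵥ v = x := by
    rw [mulVec_mulVec, mul_nonsing_inv B ((isUnit_iff_isUnit_det B).mp hB.isUnit), one_mulVec]
  have hvu : v ⬝ᵥ (B *ᵥ u) = x ⬝ᵥ u := by
    rw [dotProduct_mulVec, ← mulVec_transpose, ← conjTranspose_eq_transpose_of_trivial,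
      hB.isHermitian.eq, hv]
  have hsq : 0 ≤ (u - v) ⬝ᵥ (B *ᵥ (u - v)) := by
    simpa only [star_trivial] using hB.posSemidef.dotProduct_mulVec_nonneg (u - v)
  rw [mulVec_sub, sub_dotProduct, dotProduct_sub, dotProduct_sub, hvu, hv,
    dotProduct_comm x u, dotProduct_comm v x] at hsq
  linarith

lemma PosDef.dotProduct_inv_mulVec_lt_of_posDef_sub {A B : Matrix k k K} (hB : B.PosDef)
    (hAB : (A - B).PosDef) {x : k → K} (hx : x ≠ 0) :
    x ⬝ᵥ (A⁻¹ *ᵥ x) < x ⬝ᵥ (B⁻¹ *ᵥ x) := by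
  have hA : A.PosDef := by simpa using hB.add hAB
  set u := A⁻¹ *ᵥ x
  have hu : A *ᵥ u = x := by
    rw [mulVec_mulVec, mul_nonsing_inv A ((isUnit_iff_isUnit_det A).mp hA.isUnit), one_mulVec]
  have hu0 : u ≠ 0 := fun h => hx (by rw [← hu, h, mulVec_zero])
  have hgap : u ⬝ᵥ (B *ᵥ u) < u ⬝ᵥ x := by
    have := hAB.dotProduct_mulVec_pos hu0
    rw [star_trivial, sub_mulVec, dotProduct_sub, hu] at this
    linarith
  have := hB.two_mul_dotProduct_sub_le_dotProduct_inv_mulVec u x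
  rw [dotProduct_comm x u]
  linarith

end TrivialStar

end Matrix

theorem quadratic_form_inv_comparison_general
    (n q : ℕ)
    (X : Matrix (Fin n) (Fin (q + 1)) ℝ) (hX : X.rank = q + 1)
    (t ζ : Fin n → ℝ)
    (ht0 : ∀ i, 0 < t i) (ht1 : ∀ i, t i < 1)
    (hζ : ∀ i, 0 < ζ i)
    (p : ℝ) (hp1 : 1 < p)
    (DO DR : Matrix (Fin n) (Fin n) ℝ)
    (hDO : DO = Matrix.diagonal (fun i => t i ^ (2 - p) * ζ i ^ (2 - p)))
    (hDR : DR = Matrix.diagonal (fun i => t i * ζ i ^ (2 - p))) :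
    ∀ x : Fin (q + 1) → ℝ, x ≠ 0 →
      x ⬝ᵥ ((Xᵀ * DR * X)⁻¹ *ᵥ x) > x ⬝ᵥ ((Xᵀ * DO * X)⁻¹ *ᵥ x) ∧
      x ⬝ᵥ ((Xᵀ * DO * X)⁻¹ *ᵥ x) > 0 := by
  intro x hx
  subst hDO hDR
  have hX : Function.Injective X.mulVec :=
    mulVec_injective_of_rank_eq_card_s8 (hX.trans (Fintype.card_fin _).symm)
  have hR : ∀ i, 0 < t i * ζ i ^ (2 - p) := fun i =>
    mul_pos (ht0 i) (rpow_pos_of_pos (hζ i) _)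
  have hRO : ∀ i, t i * ζ i ^ (2 - p) < t i ^ (2 - p) * ζ i ^ (2 - p) := fun i =>
    mul_lt_mul_of_pos_right (self_lt_rpow_of_lt_one (ht0 i) (ht1 i) (by linarith))
      (rpow_pos_of_pos (hζ i) _)
  have hB := PosDef.transpose_mul_diagonal_mul hX hR
  have hAB := PosDef.transpose_mul_diagonal_mul hX fun i => sub_pos.mpr (hRO i)
  rw [← diagonal_sub, Matrix.mul_sub, Matrix.sub_mul] at hAB
  have hA : (Xᵀ * diagonal (fun i => t i ^ (2 - p) * ζ i ^ (2 - p)) * X).PosDef := by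
    simpa using hB.add hAB
  exact ⟨hB.dotProduct_inv_mulVec_lt_of_posDef_sub hAB hx,
    by simpa using hA.inv.dotProduct_mulVec_pos hx⟩

/-- Strict comparison of the quadratic forms of the inverse Fisher
information cores: for every nonzero `x`,
`xᵀ(XᵀD^R X)⁻¹x > xᵀ(XᵀD^O X)⁻¹x > 0`. -/
theorem quadratic_form_inv_comparison
    (n q : ℕ) (hn : 0 < n) (hq : 0 < q)
    (X : Matrix (Fin n) (Fin (q + 1)) ℝ) (hX : X.rank = q + 1)
    (t ζ : Fin n → ℝ)
    (ht0 : ∀ i, 0 < t i) (ht1 : ∀ i, t i < 1)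
    (hζ : ∀ i, 0 < ζ i)
    (p : ℝ) (hp1 : 1 < p) (hp2 : p < 2)
    (DO DR : Matrix (Fin n) (Fin n) ℝ)
    (hDO : DO = Matrix.diagonal (fun i => t i ^ (2 - p) * ζ i ^ (2 - p)))
    (hDR : DR = Matrix.diagonal (fun i => t i * ζ i ^ (2 - p))) :
    ∀ x : Fin (q + 1) → ℝ, x ≠ 0 →
      x ⬝ᵥ ((Xᵀ * DR * X)⁻¹ *ᵥ x) > x ⬝ᵥ ((Xᵀ * DO * X)⁻¹ *ᵥ x) ∧
      x ⬝ᵥ ((Xᵀ * DO * X)⁻¹ *ᵥ x) > 0 :=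
  quadratic_form_inv_comparison_general n q X hX t ζ ht0 ht1 hζ p hp1 DO DR hDO hDR
end

section
/- For every p ∈ (1,2) the offset approach fails the balance property on the following homogeneous two-contract portfolio: with risk exposures t₁ = 1/4, t₂ = 1 and annualized loss costs z₁ = 1, z₂ = 0, the offset-approach maximum likelihood estimate ζ̂^O = ( t₁^{2−p}·z₁ + t₂^{2−p}·z₂ ) / ( t₁^{2−p} + t₂^{2−p} ) = (1/4)^{2−p} / ( (1/4)^{2−p} + 1 ) satisfies (t₁ + t₂)·ζ̂^O ≠ t₁·z₁ + t₂·z₂; that is, (5/4)·(1/4)^{2−p}/((1/4)^{2−p} + 1) ≠ 1/4. -/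
open Real

/-- A concrete homogeneous two-contract portfolio (exposures `1/4` and `1`,
annualized loss costs `1` and `0`) on which the offset approach fails the
balance property for every Tweedie variance parameter `p ∈ (1,2)`. -/
theorem offset_fails_balance
    (p : ℝ) (hp1 : 1 < p) (hp2 : p < 2)
    (t₁ t₂ z₁ z₂ : ℝ)
    (ht₁ : t₁ = 1/4) (ht₂ : t₂ = 1) (hz₁ : z₁ = 1) (hz₂ : z₂ = 0)
    (ζO : ℝ)
    (hζO : ζO = (t₁ ^ (2 - p) * z₁ + t₂ ^ (2 - p) * z₂)
                  / (t₁ ^ (2 - p) + t₂ ^ (2 - p))) :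
    ζO = (1/4 : ℝ) ^ (2 - p) / ((1/4 : ℝ) ^ (2 - p) + 1) ∧
    (t₁ + t₂) * ζO ≠ t₁ * z₁ + t₂ * z₂ ∧
    (5/4 : ℝ) * (1/4 : ℝ) ^ (2 - p) / ((1/4 : ℝ) ^ (2 - p) + 1) ≠ 1/4 := by
  subst ht₁ ht₂ hz₁ hz₂ hζO
  set a : ℝ := (1/4 : ℝ) ^ (2 - p) with ha
  have hpos : 0 < a := Real.rpow_pos_of_pos (by norm_num) _
  have hgt : (1/4 : ℝ) < a := by
    have := Real.rpow_lt_rpow_of_exponent_gt (x := (1/4 : ℝ)) (by norm_num)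
      (by norm_num) (by linarith : 2 - p < 1)
    simpa [ha, Real.rpow_one, one_div] using this
  have hden : a + 1 ≠ 0 := by positivity
  have h1 : (1 : ℝ) ^ (2 - p) = 1 := Real.one_rpow _
  have key : (5/4 : ℝ) * a / (a + 1) ≠ 1/4 := by
    intro h
    have : (5/4 : ℝ) * a = (1/4) * (a + 1) := by
      field_simp at h ⊢; linarith [h]
    linarith
  refine ⟨by rw [h1]; ring, ?_, key⟩
  rw [h1]
  intro h
  apply key
  field_simp at h ⊢
  linarith
end
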